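/- If F₀ : ℝ → [0,1] is a cumulative distribution function (right-continuous, increasing, with limits 0 at −∞ and 1 at +∞), then for any positive reals a₁,…,a_q, the function x ↦ g_{a₁,…,a_q}(F₀(x)) is also a cumulative distribution function. -/

import Mathlib

noncomputable def g (q : ℕ) (a : ℕ → ℝ) (u : ℝ) : ℝ :=
  (q : ℝ) ^ q * u * (∏ i ∈ Finset.Icc 2 q, (a i + u - a i * u)) /
    ((∑ i ∈ Finset.Icc 1 q, a i) - ((∑ i ∈ Finset.Icc 1 q, a i) - q) * u) ^ q

/-- A cumulative distribution function. -/
def IsCDF (F : ℝ → ℝ) : Prop :=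
  Monotone F ∧ (∀ x, ContinuousWithinAt F (Set.Ici x) x) ∧
    Filter.Tendsto F Filter.atBot (nhds 0) ∧ Filter.Tendsto F Filter.atTop (nhds 1)

open Finset Filter Topology Real

/-! With `bᵢ(u) = aᵢ + u - aᵢ u`, which runs from `aᵢ` to `1` as `u` runs over `[0, 1]`,
`g(u) = q^q · u / b₁(u) · ∏ bᵢ(u) / (∑ bᵢ(u))^q`. The first factor is clearly increasing. So is
the second: since `(1 - u) bᵢ' = 1 - bᵢ`, `(1 - u)` times its log-derivative equals
`∑ 1 / bᵢ - q² / ∑ bᵢ ≥ 0` (AM-HM). Thus `g` is continuous and increasing on `[0, 1]` with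
`g 0 = 0` and `g 1 = 1`, and composing a CDF with values in `[0, 1]` with such a map gives a CDF. -/

theorem IsCDF.comp_of_monotoneOn {F φ : ℝ → ℝ} (hF : IsCDF F) (hrange : ∀ x, F x ∈ Set.Icc 0 1)
    (hmono : MonotoneOn φ (Set.Icc 0 1)) (hcont : ContinuousOn φ (Set.Icc 0 1)) (h0 : φ 0 = 0)
    (h1 : φ 1 = 1) : IsCDF (φ ∘ F) := by
  obtain ⟨hmonoF, hright, hbot, htop⟩ := hF
  have hlim {l : Filter ℝ} {c : ℝ} (hc : c ∈ Set.Icc 0 1) (h : Tendsto F l (𝓝 c)) :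
      Tendsto (φ ∘ F) l (𝓝 (φ c)) :=
    (hcont c hc).tendsto.comp (tendsto_nhdsWithin_iff.2 ⟨h, .of_forall hrange⟩)
  refine ⟨fun x y hxy => hmono (hrange x) (hrange y) (hmonoF hxy),
    fun x => (hcont _ (hrange x)).comp (hright x) fun y _ => hrange y, ?_, ?_⟩
  · simpa [h0] using hlim ⟨le_rfl, zero_le_one⟩ hbot
  · simpa [h1] using hlim ⟨zero_le_one, le_rfl⟩ htop

lemma add_sub_mul_pos {a u : ℝ} (ha : 0 < a) (hu : u ∈ Set.Icc (0 : ℝ) 1) : 0 < a + u - a * u := by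
  nlinarith [mul_nonneg ha.le (sub_nonneg.2 hu.2), hu.1]

lemma hasDerivAt_add_sub_mul (a u : ℝ) : HasDerivAt (fun u => a + u - a * u) (1 - a) u := by
  simpa using ((hasDerivAt_id' u).const_add a).fun_sub ((hasDerivAt_id' u).const_mul a)

lemma sum_add_sub_mul {ι : Type*} (s : Finset ι) (a : ι → ℝ) (u : ℝ) :
    ∑ i ∈ s, (a i + u - a i * u) = ∑ i ∈ s, a i - (∑ i ∈ s, a i - #s) * u := by
  rw [sum_sub_distrib, sum_add_distrib, sum_const, ← sum_mul, nsmul_eq_mul]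
  ring

lemma sum_add_sub_mul_pos {ι : Type*} {s : Finset ι} (hs : s.Nonempty) {a : ι → ℝ}
    (ha : ∀ i ∈ s, 0 < a i) {u : ℝ} (hu : u ∈ Set.Icc (0 : ℝ) 1) :
    0 < ∑ i ∈ s, (a i + u - a i * u) :=
  sum_pos (fun i hi => add_sub_mul_pos (ha i hi) hu) hs

lemma sq_card_div_sum_le_sum_inv {ι : Type*} (s : Finset ι) {x : ι → ℝ} (hx : ∀ i ∈ s, 0 < x i) :
    (#s : ℝ) ^ 2 / ∑ i ∈ s, x i ≤ ∑ i ∈ s, (x i)⁻¹ := by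
  simpa using sq_sum_div_le_sum_sq_div s 1 hx

theorem monotoneOn_prod_div_sum_pow {ι : Type*} (s : Finset ι) {a : ι → ℝ}
    (ha : ∀ i ∈ s, 0 < a i) :
    MonotoneOn (fun u => (∏ i ∈ s, (a i + u - a i * u)) / (∑ i ∈ s, (a i + u - a i * u)) ^ #s)
      (Set.Icc 0 1) := by
  rcases s.eq_empty_or_nonempty with rfl | hs
  · simpa using monotoneOn_const
  set x : ℝ → ι → ℝ := fun u i => a i + u - a i * u
  have hx {u} (hu : u ∈ Set.Icc (0 : ℝ) 1) (i) (hi : i ∈ s) : 0 < x u i :=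
    add_sub_mul_pos (ha i hi) hu
  have hD {u} (hu : u ∈ Set.Icc (0 : ℝ) 1) : 0 < ∑ i ∈ s, x u i := sum_add_sub_mul_pos hs ha hu
  set L : ℝ → ℝ := fun u => ∑ i ∈ s, log (x u i) - #s * log (∑ i ∈ s, x u i)
  set L' : ℝ → ℝ := fun u =>
    ∑ i ∈ s, (1 - a i) / x u i - #s * ((∑ i ∈ s, (1 - a i)) / ∑ i ∈ s, x u i)
  have hL {u} (hu : u ∈ Set.Icc (0 : ℝ) 1) : HasDerivAt L (L' u) u :=
    (HasDerivAt.fun_sum fun i hi => (hasDerivAt_add_sub_mul (a i) u).log (hx hu i hi).ne').sub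
      (((HasDerivAt.fun_sum fun i _ => hasDerivAt_add_sub_mul (a i) u).log
        (hD hu).ne').const_mul _)
  have hL'_nonneg {u} (hu : u ∈ Set.Ioo (0 : ℝ) 1) : 0 ≤ L' u := by
    have hu' : u ∈ Set.Icc (0 : ℝ) 1 := Set.Ioo_subset_Icc_self hu
    have h1u : 1 - u ≠ 0 := (sub_pos.2 hu.2).ne'
    have hslope (i) : 1 - a i = (1 - x u i) / (1 - u) := by
      field_simp; ring
    have hfirst : ∑ i ∈ s, (1 - a i) / x u i = (∑ i ∈ s, (x u i)⁻¹ - #s) / (1 - u) := by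
      calc ∑ i ∈ s, (1 - a i) / x u i = ∑ i ∈ s, ((x u i)⁻¹ - 1) / (1 - u) :=
            sum_congr rfl fun i hi => by rw [hslope]; field_simp [(hx hu' i hi).ne']
        _ = _ := by rw [← sum_div, sum_sub_distrib, sum_const, nsmul_one]
    have hsecond : ∑ i ∈ s, (1 - a i) = (#s - ∑ i ∈ s, x u i) / (1 - u) := by
      simp only [hslope, ← sum_div, sum_sub_distrib, sum_const, nsmul_eq_mul, mul_one]
    have : L' u = (∑ i ∈ s, (x u i)⁻¹ - #s ^ 2 / ∑ i ∈ s, x u i) / (1 - u) := by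
      simp only [L', hfirst, hsecond]
      field_simp [(hD hu').ne']
      ring
    rw [this]
    exact div_nonneg (sub_nonneg.2 (sq_card_div_sum_le_sum_inv s (hx hu'))) (sub_pos.2 hu.2).le
  have hLmono : MonotoneOn L (Set.Icc 0 1) := by
    refine monotoneOn_of_hasDerivWithinAt_nonneg (f' := L') (convex_Icc 0 1)
      (fun u hu => (hL hu).continuousAt.continuousWithinAt) (fun u hu => ?_) ?_
    · rw [interior_Icc] at hu
      exact (hL (Set.Ioo_subset_Icc_self hu)).hasDerivWithinAt
    · simpa only [interior_Icc] using fun u hu => hL'_nonneg hu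
  refine (exp_monotone.comp_monotoneOn hLmono).congr fun u hu => ?_
  simp only [Function.comp, L, exp_sub, exp_sum, exp_nat_mul, exp_log (hD hu)]
  rw [prod_congr rfl fun i hi => exp_log (hx hu i hi)]

lemma monotoneOn_div_add_sub_mul {a : ℝ} (ha : 0 < a) :
    MonotoneOn (fun u => u / (a + u - a * u)) (Set.Icc 0 1) := by
  intro u hu v hv huv
  rw [div_le_div_iff₀ (add_sub_mul_pos ha hu) (add_sub_mul_pos ha hv)]
  nlinarith

lemma sum_Icc_add_sub_mul (q : ℕ) (a : ℕ → ℝ) (u : ℝ) :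
    ∑ i ∈ Finset.Icc 1 q, (a i + u - a i * u) =
      ∑ i ∈ Finset.Icc 1 q, a i - (∑ i ∈ Finset.Icc 1 q, a i - q) * u := by
  simpa using sum_add_sub_mul (Finset.Icc 1 q) a u

lemma g_eq_mul_prod_div {q : ℕ} (hq : 1 ≤ q) (a : ℕ → ℝ) {u : ℝ} (hu : a 1 + u - a 1 * u ≠ 0) :
    g q a u = (q : ℝ) ^ q * (u / (a 1 + u - a 1 * u) *
      ((∏ i ∈ Finset.Icc 1 q, (a i + u - a i * u)) /
        (∑ i ∈ Finset.Icc 1 q, (a i + u - a i * u)) ^ q)) := by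
  have hprod : ∏ i ∈ Finset.Icc 1 q, (a i + u - a i * u) =
      (a 1 + u - a 1 * u) * ∏ i ∈ Finset.Icc 2 q, (a i + u - a i * u) := by
    rw [← Finset.insert_Icc_add_one_left_eq_Icc hq, prod_insert (by simp)]
    rfl
  rw [g, hprod, sum_Icc_add_sub_mul]
  field_simp
  rw [mul_div_mul_right _ _ (by simpa [mul_comm] using hu)]

lemma g_zero (q : ℕ) (a : ℕ → ℝ) : g q a 0 = 0 := by simp [g]

lemma g_one (q : ℕ) (a : ℕ → ℝ) : g q a 1 = 1 := by simp [g]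

lemma continuousOn_g {q : ℕ} (hq : 1 ≤ q) {a : ℕ → ℝ} (ha : ∀ i ∈ Finset.Icc 1 q, 0 < a i) :
    ContinuousOn (g q a) (Set.Icc 0 1) := by
  refine ContinuousOn.div (by fun_prop) (by fun_prop) fun u hu => pow_ne_zero _ ?_
  rw [← sum_Icc_add_sub_mul]
  exact (sum_add_sub_mul_pos ⟨1, by simpa⟩ ha hu).ne'

lemma monotoneOn_g {q : ℕ} (hq : 1 ≤ q) {a : ℕ → ℝ} (ha : ∀ i ∈ Finset.Icc 1 q, 0 < a i) :
    MonotoneOn (g q a) (Set.Icc 0 1) := by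
  have ha1 : 0 < a 1 := ha 1 (by simpa)
  have hratio := monotoneOn_prod_div_sum_pow (Finset.Icc 1 q) ha
  simp only [Nat.card_Icc, add_tsub_cancel_right] at hratio
  intro u hu v hv huv
  rw [g_eq_mul_prod_div hq a (add_sub_mul_pos ha1 hu).ne',
    g_eq_mul_prod_div hq a (add_sub_mul_pos ha1 hv).ne']
  refine mul_le_mul_of_nonneg_left (mul_le_mul (monotoneOn_div_add_sub_mul ha1 hu hv huv)
    (hratio hu hv huv) ?_ ?_) (by positivity : (0 : ℝ) ≤ (q : ℝ) ^ q)
  · exact div_nonneg (prod_nonneg fun i hi => (add_sub_mul_pos (ha i hi) hu).le)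
      (pow_nonneg (sum_add_sub_mul_pos ⟨1, by simpa⟩ ha hu).le _)
  · exact div_nonneg hv.1 (add_sub_mul_pos ha1 hv).le

theorem stmt_5 (q : ℕ) (hq : 1 ≤ q) (a : ℕ → ℝ)
    (ha : ∀ i ∈ Finset.Icc 1 q, 0 < a i)
    (F₀ : ℝ → ℝ) (hF₀ : IsCDF F₀) (hrange : ∀ x, F₀ x ∈ Set.Icc (0:ℝ) 1) :
    IsCDF (fun x => g q a (F₀ x)) :=
  hF₀.comp_of_monotoneOn hrange (monotoneOn_g hq ha) (continuousOn_g hq ha) (g_zero q a) (g_one q a)
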